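/- (Directional integration-by-parts identity on ℝⁿ underlying sliced score matching.) Let p : ℝⁿ → ℝ be continuously differentiable with p(x) > 0 for all x, let s : ℝⁿ → ℝⁿ be continuously differentiable with compact support, and let v ∈ ℝⁿ. Then ∫_{ℝⁿ} p(x) · ⟨v, ∇ log p(x)⟩ · ⟨v, s(x)⟩ dx = − ∫_{ℝⁿ} p(x) · ⟨v, (Ds(x)) v⟩ dx, where Ds(x) denotes the (Fréchet) derivative of s at x and ⟨·,·⟩ the Euclidean inner product, provided both integrands are integrable. -/

import Mathlib

open scoped RealInnerProductSpace

/-!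
Since `∇ log p = ∇p / p`, the weight `p` cancels the logarithm: the left integrand is
`∂ᵥp · ⟪v, s⟫`. Integrating by parts in the direction `v` moves the derivative onto the
compactly supported factor `⟪v, s⟫`, whose directional derivative is `⟪v, (Ds) v⟫`.
-/

open MeasureTheory

variable {E : Type*} [NormedAddCommGroup E] [InnerProductSpace ℝ E]

theorem mul_inner_gradient_log_eq_fderiv [CompleteSpace E] {p : E → ℝ} {x : E}
    (hp : DifferentiableAt ℝ p x) (hpx : p x ≠ 0) (v : E) :
    p x * ⟪v, gradient (fun y => Real.log (p y)) x⟫ = fderiv ℝ p x v := by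
  rw [real_inner_comm, inner_gradient_left, fderiv.log hp hpx,
    smul_apply, smul_eq_mul, mul_inv_cancel_left₀ hpx]

theorem fderiv_inner_const_left_apply {F : Type*} [NormedAddCommGroup F] [NormedSpace ℝ F]
    {s : F → E} {x : F} (hs : DifferentiableAt ℝ s x) (v : E) (w : F) :
    fderiv ℝ (fun y => ⟪v, s y⟫) x w = ⟪v, fderiv ℝ s x w⟫ := by
  rw [fderiv_inner_apply ℝ (differentiableAt_const v) hs, fderiv_const_apply,
    zero_apply, inner_zero_left, add_zero]

theorem integral_mul_inner_gradient_log_mul_eq_neg [CompleteSpace E] [FiniteDimensional ℝ E]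
    [MeasurableSpace E] [BorelSpace E] {μ : Measure E} [μ.IsAddHaarMeasure]
    {p g : E → ℝ} (hp : Differentiable ℝ p) (hp0 : ∀ x, p x ≠ 0)
    (hg : Differentiable ℝ g) (hgsupp : HasCompactSupport g) (v : E)
    (hint1 : Integrable (fun x => p x * ⟪v, gradient (fun y => Real.log (p y)) x⟫ * g x) μ)
    (hint2 : Integrable (fun x => p x * fderiv ℝ g x v) μ) :
    ∫ x, p x * ⟪v, gradient (fun y => Real.log (p y)) x⟫ * g x ∂μ
      = - ∫ x, p x * fderiv ℝ g x v ∂μ := by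
  have hscore : ∀ x, p x * ⟪v, gradient (fun y => Real.log (p y)) x⟫ * g x
      = fderiv ℝ p x v * g x := fun x => by
    rw [mul_inner_gradient_log_eq_fderiv (hp x) (hp0 x)]
  simp only [hscore] at hint1 ⊢
  have hpg : Integrable (fun x => p x * g x) μ :=
    (hp.continuous.mul hg.continuous).integrable_of_hasCompactSupport hgsupp.mul_left
  rw [integral_mul_fderiv_eq_neg_fderiv_mul_of_integrable hint1 hint2 hpg
    (fun x _ => hp x) (fun x _ => hg x), neg_neg]

/-- Directional integration-by-parts identity on ℝⁿ underlying sliced score matching: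
for a positive `C¹` density `p`, a compactly supported `C¹` vector field `s` and a
direction `v`, `∫ p(x) ⟪v, ∇log p(x)⟫ ⟪v, s(x)⟫ dx = − ∫ p(x) ⟪v, (Ds(x)) v⟫ dx`,
provided both integrands are integrable. -/
theorem sliced_score_matching_integration_by_parts
    (n : ℕ)
    (p : EuclideanSpace ℝ (Fin n) → ℝ)
    (s : EuclideanSpace ℝ (Fin n) → EuclideanSpace ℝ (Fin n))
    (hp : ContDiff ℝ 1 p) (hppos : ∀ x, 0 < p x)
    (hs : ContDiff ℝ 1 s) (hssupp : HasCompactSupport s)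
    (v : EuclideanSpace ℝ (Fin n))
    (hint1 : MeasureTheory.Integrable
      (fun x => p x * ⟪v, gradient (fun y => Real.log (p y)) x⟫ * ⟪v, s x⟫))
    (hint2 : MeasureTheory.Integrable (fun x => p x * ⟪v, (fderiv ℝ s x) v⟫)) :
    ∫ x, p x * ⟪v, gradient (fun y => Real.log (p y)) x⟫ * ⟪v, s x⟫
      = - ∫ x, p x * ⟪v, (fderiv ℝ s x) v⟫ := by
  have hsd : Differentiable ℝ s := hs.differentiable one_ne_zero
  have hDg : ∀ x, fderiv ℝ (fun y => ⟪v, s y⟫) x v = ⟪v, fderiv ℝ s x v⟫ :=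
    fun x => fderiv_inner_const_left_apply (hsd x) v v
  simp only [← hDg] at hint2 ⊢
  exact integral_mul_inner_gradient_log_mul_eq_neg (hp.differentiable one_ne_zero)
    (fun x => (hppos x).ne') (fun x => (differentiableAt_const v).inner ℝ (hsd x))
    (hssupp.comp_left (inner_zero_right v)) v hint1 hint2
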